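/- There exist theories (Δ_h, w_h), (Δ_l, w_l) and a refinement mapping m such that (Δ_h, w_h) is a weak exact abstraction of (Δ_l, w_l) relative to m (probabilities of all high-level formulas match under m), but Δ_h is not a sound and complete abstraction of Δ_l relative to m. -/
import Mathlib


/-- Propositional formulas over atoms of type `α`. -/
inductive Form (α : Type) where
  | tru : Form α
  | atom : α → Form α
  | neg : Form α → Form α
  | conj : Form α → Form α → Form α
  | disj : Form α → Form α → Form α

/-- Truth value of a formula in a model `M : α → Bool`. -/
def Form.eval {α : Type} (M : α → Bool) : Form α → Bool
  | .tru => true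
  | .atom a => M a
  | .neg φ => !(φ.eval M)
  | .conj φ ψ => φ.eval M && ψ.eval M
  | .disj φ ψ => φ.eval M || ψ.eval M

/-- Homomorphic extension of a refinement mapping `m` on atoms to all formulas. -/
def Form.map {α β : Type} (m : α → Form β) : Form α → Form β
  | .tru => .tru
  | .atom a => m a
  | .neg φ => .neg (φ.map m)
  | .conj φ ψ => .conj (φ.map m) (ψ.map m)
  | .disj φ ψ => .disj (φ.map m) (ψ.map m)

/-- The set of atoms mentioned in a formula. -/
def Form.atoms {α : Type} [DecidableEq α] : Form α → Finset α
  | .tru => ∅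
  | .atom a => {a}
  | .neg φ => φ.atoms
  | .conj φ ψ => φ.atoms ∪ ψ.atoms
  | .disj φ ψ => φ.atoms ∪ ψ.atoms

/-- Weighted model count of `Δ` under literal weights `w` (`w a true` is the
weight of the positive literal on atom `a`, `w a false` of the negative one). -/
noncomputable def WMC {α : Type} [Fintype α] [DecidableEq α]
    (Δ : Form α) (w : α → Bool → ℝ) : ℝ :=
  ∑ M ∈ Finset.univ.filter (fun M : α → Bool => Δ.eval M = true), ∏ a, w a (M a)

/-- `Pr(φ, Δ, w) = WMC(φ ∧ Δ, w) / WMC(Δ, w)`. -/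
noncomputable def Pr {α : Type} [Fintype α] [DecidableEq α]
    (φ Δ : Form α) (w : α → Bool → ℝ) : ℝ :=
  WMC (Form.conj φ Δ) w / WMC Δ w

/-- `Mh` is `m`-isomorphic to `Ml`. -/
def Iso {α β : Type} (m : α → Form β) (Mh : α → Bool) (Ml : β → Bool) : Prop :=
  ∀ a : α, Mh a = (m a).eval Ml

lemma eval_map {α β : Type} (m : α → Form β) (φ : Form α) (Ml : β → Bool) :
    (φ.map m).eval Ml = φ.eval (fun a => (m a).eval Ml) := by
  induction φ with
  | tru => rfl
  | atom a => rfl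
  | neg φ ih => simp [Form.map, Form.eval, ih]
  | conj φ ψ ih1 ih2 => simp [Form.map, Form.eval, ih1, ih2]
  | disj φ ψ ih1 ih2 => simp [Form.map, Form.eval, ih1, ih2]

lemma WMC_ind {α : Type} [Fintype α] [DecidableEq α] (Δ : Form α) :
    WMC Δ (fun _ b => if b then (1:ℝ) else 0)
      = if Δ.eval (fun _ => true) then 1 else 0 := by
  unfold WMC
  have key : ∀ M : α → Bool,
      (∏ a, (if M a then (1:ℝ) else 0)) = if M = (fun _ => true) then 1 else 0 := by
    intro M
    rw [Finset.prod_boole]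
    congr 1
    simp only [eq_iff_iff, funext_iff]
    constructor
    · intro h a; simpa using h a (Finset.mem_univ a)
    · intro h a _; simp [h a]
  calc (∑ M ∈ Finset.univ.filter (fun M : α → Bool => Δ.eval M = true),
          ∏ a, (if M a then (1:ℝ) else 0))
      = ∑ M ∈ Finset.univ.filter (fun M : α → Bool => Δ.eval M = true),
          (if M = (fun _ => true) then (1:ℝ) else 0) := by
        exact Finset.sum_congr rfl (fun M _ => key M)
    _ = if (fun _ => true) ∈ Finset.univ.filter
          (fun M : α → Bool => Δ.eval M = true) then 1 else 0 :=
        Finset.sum_ite_eq' _ _ _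
    _ = if Δ.eval (fun _ => true) then 1 else 0 := by
        simp

theorem stmt12 :
    ∃ (Δh : Form (Fin 3)) (Δl : Form (Fin 1)) (wh : Fin 3 → Bool → ℝ)
      (wl : Fin 1 → Bool → ℝ) (m : Fin 3 → Form (Fin 1)),
      (∀ a b, 0 ≤ wh a b) ∧ (∀ a b, 0 ≤ wl a b) ∧
      WMC Δh wh ≠ 0 ∧ WMC Δl wl ≠ 0 ∧
      (∀ φ : Form (Fin 3), Pr φ Δh wh = Pr (φ.map m) Δl wl) ∧
      ¬((∀ Ml : Fin 1 → Bool, Δl.eval Ml = true →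
          ∃ Mh : Fin 3 → Bool, Δh.eval Mh = true ∧ Iso m Mh Ml) ∧
        (∀ Mh : Fin 3 → Bool, Δh.eval Mh = true →
          ∃ Ml : Fin 1 → Bool, Δl.eval Ml = true ∧ Iso m Mh Ml)) := by
  refine ⟨Form.tru, Form.tru, fun _ b => if b then 1 else 0,
    fun _ b => if b then 1 else 0, fun _ => Form.atom 0, ?_, ?_, ?_, ?_, ?_, ?_⟩
  · intro a b; dsimp only; split <;> norm_num
  · intro a b; dsimp only; split <;> norm_num
  · rw [WMC_ind]; simp [Form.eval]
  · rw [WMC_ind]; simp [Form.eval]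
  · intro φ
    unfold Pr
    rw [WMC_ind, WMC_ind, WMC_ind, WMC_ind]
    have h1 : (Form.conj φ Form.tru).eval (fun _ => true) = φ.eval (fun _ => true) := by
      simp [Form.eval]
    have h2 : (Form.conj (φ.map fun _ => (Form.atom 0 : Form (Fin 1))) Form.tru).eval (fun _ => true)
        = φ.eval (fun _ => true) := by
      simp [Form.eval, eval_map]
    rw [h1, h2]
    simp [Form.eval]
  · rintro ⟨-, h2⟩
    obtain ⟨Ml, -, hiso⟩ := h2 (fun i => decide (i = 0)) rfl
    have ha := hiso 0
    have hb := hiso 1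
    simp [Form.eval, Iso] at ha hb
    rw [ha] at hb
    exact absurd hb (by simp)
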